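/- arXiv:math/0501019 — 2 statements merged into one kernel-verified Lean document; each statement's English description precedes it below -/
import Mathlib

section
/- There exists a constant C > 0, depending only on q, such that for all n ∈ ½ℤ₊ with n ≥ 1/2, all half-integers i ∈ {−n, …, n} and j ∈ {−n+1/2, …, n−1/2}, every entry of the 2×2 matrix b⁺_{nij} − q^{n+j−1/2}(1−q^{2n+2i+2})^{1/2} · diag(q(1−q^{2n−2j+3})^{1/2}, (1−q^{2n−2j+1})^{1/2}) has absolute value at most C·q^{2n}. -/
noncomputable section

open Real

/-- The q-number `[m] = (q^m - q^(-m))/(q - q⁻¹)`. -/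
def qnum (q m : ℝ) : ℝ := (q ^ m - q ^ (-m)) / (q - q⁻¹)

/-- The 2×2 matrix `a⁺_{nij}`. -/
def aP (q n i j : ℝ) : Matrix (Fin 2) (Fin 2) ℝ :=
  (q ^ ((i + j - 1/2) / 2) * Real.sqrt (qnum q (n + i + 1))) •
    !![q ^ (-n - 1/2) * Real.sqrt (qnum q (n + j + 3/2)) / qnum q (2*n + 2), 0;
       q ^ ((1:ℝ)/2) * Real.sqrt (qnum q (n - j + 1/2)) / (qnum q (2*n + 1) * qnum q (2*n + 2)),
       q ^ (-n) * Real.sqrt (qnum q (n + j + 1/2)) / qnum q (2*n + 1)]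

/-- The 2×2 matrix `a⁻_{nij}`. -/
def aM (q n i j : ℝ) : Matrix (Fin 2) (Fin 2) ℝ :=
  (q ^ ((i + j - 1/2) / 2) * Real.sqrt (qnum q (n - i))) •
    !![q ^ (n + 1) * Real.sqrt (qnum q (n - j + 1/2)) / qnum q (2*n + 1),
       -(q ^ ((1:ℝ)/2) * Real.sqrt (qnum q (n + j + 1/2)) / (qnum q (2*n) * qnum q (2*n + 1)));
       0, q ^ (n + 1/2) * Real.sqrt (qnum q (n - j - 1/2)) / qnum q (2*n)]

/-- The 2×2 matrix `b⁺_{nij}`. -/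
def bP (q n i j : ℝ) : Matrix (Fin 2) (Fin 2) ℝ :=
  (q ^ ((i + j - 1/2) / 2) * Real.sqrt (qnum q (n + i + 1))) •
    !![Real.sqrt (qnum q (n - j + 3/2)) / qnum q (2*n + 2), 0;
       -(q ^ (-n - 1) * Real.sqrt (qnum q (n + j + 1/2)) / (qnum q (2*n + 1) * qnum q (2*n + 2))),
       q ^ (-(1:ℝ)/2) * Real.sqrt (qnum q (n - j + 1/2)) / qnum q (2*n + 1)]

/-- The 2×2 matrix `b⁻_{nij}`. -/
def bM (q n i j : ℝ) : Matrix (Fin 2) (Fin 2) ℝ :=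
  (q ^ ((i + j - 1/2) / 2) * Real.sqrt (qnum q (n - i))) •
    !![-(q ^ (-(1:ℝ)/2) * Real.sqrt (qnum q (n + j + 1/2)) / qnum q (2*n + 1)),
       -(q ^ n * Real.sqrt (qnum q (n - j + 1/2)) / (qnum q (2*n) * qnum q (2*n + 1)));
       0, -(Real.sqrt (qnum q (n + j - 1/2)) / qnum q (2*n))]

/-- `n` is a nonnegative half-integer: `n ∈ ½ℤ₊ = {0, 1/2, 1, 3/2, …}`. -/
def HalfNat (n : ℝ) : Prop := ∃ N : ℕ, (N : ℝ) = 2 * n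

/-- `i ∈ {-n, -n+1, …, n}`. -/
def IdxRange (n i : ℝ) : Prop := (∃ k : ℕ, (k : ℝ) = i + n) ∧ i ≤ n

/-- `j ∈ {-n+1/2, -n+3/2, …, n-1/2}`. -/
def JRangeIn (n j : ℝ) : Prop := (∃ k : ℕ, (k : ℝ) = j + n - 1/2) ∧ j ≤ n - 1/2

/-- `j ∈ {-n-1/2, -n+1/2, …, n+1/2}`. -/
def JRangeOut (n j : ℝ) : Prop := (∃ k : ℕ, (k : ℝ) = j + n + 1/2) ∧ j ≤ n + 1/2

/-!
For `0 < q < 1` the q-number is `[m] = q^(1-m) (1 - q^(2m)) / (1 - q²)`, so every entry of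
`b⁺_{nij}` is a power of `q` times square roots of numbers `1 - q^x` in `[0, 1]`, divided by
`1 - q^(4n+2)` and/or `1 - q^(4n+4)`. On the diagonal the powers of `q` are exactly those of the
comparison matrix, and the two differ by a factor `1/(1 - t) - 1 = t/(1 - t)` with
`t ≤ q^(2n)` and `1 - t ≥ 1 - q²`; the lower-left entry already carries the factor `q^(2n)`.
-/

section QNumber

variable {q : ℝ}

lemma abs_div_one_sub_sub_self_le {x t u c : ℝ} (hx0 : 0 ≤ x) (hx1 : x ≤ 1) (ht : 0 ≤ t)
    (htu : t ≤ u) (hc : 0 < c) (hct : c ≤ 1 - t) : |x / (1 - t) - x| ≤ c⁻¹ * u := by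
  have h1t : 0 < 1 - t := hc.trans_le hct
  have hx : x / (1 - t) - x = x * t / (1 - t) := by field_simp; ring
  rw [hx, abs_of_nonneg (by positivity), inv_mul_eq_div]
  calc x * t / (1 - t) ≤ 1 * u / (1 - t) := by gcongr
    _ ≤ u / c := by rw [one_mul]; gcongr; exact ht.trans htu

lemma sqrt_one_sub_rpow_le_one (hq0 : 0 ≤ q) (x : ℝ) : √(1 - q ^ x) ≤ 1 :=
  sqrt_le_one.2 (by linarith [rpow_nonneg hq0 x])

lemma one_sub_sq_le_one_sub_rpow (hq0 : 0 < q) (hq1 : q < 1) {x : ℝ} (hx : 2 ≤ x) :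
    1 - q ^ 2 ≤ 1 - q ^ x := by
  have := rpow_le_rpow_of_exponent_ge hq0 hq1.le hx
  rw [rpow_two] at this
  linarith

lemma qnum_eq (hq0 : 0 < q) (hq1 : q < 1) (m : ℝ) :
    qnum q m = q ^ (1 - m) * (1 - q ^ (2 * m)) / (1 - q ^ 2) := by
  have hq2 : 1 - q ^ 2 ≠ 0 := by nlinarith
  have hq : q - q⁻¹ = -(1 - q ^ 2) / q := by field_simp; ring
  have h2m : q ^ (2 * m) = q ^ m * q ^ m := by rw [two_mul, rpow_add hq0]
  rw [qnum, hq, rpow_neg hq0.le, rpow_sub hq0, rpow_one, h2m]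
  field_simp
  ring

lemma sqrt_qnum (hq0 : 0 < q) (hq1 : q < 1) (m : ℝ) :
    √(qnum q m) = q ^ ((1 - m) / 2) * √(1 - q ^ (2 * m)) / √(1 - q ^ 2) := by
  have hpow : q ^ (1 - m) = (q ^ ((1 - m) / 2)) ^ 2 := by
    rw [← rpow_natCast, ← rpow_mul hq0.le]; norm_num
  rw [qnum_eq hq0 hq1, hpow, sqrt_div' _ (by nlinarith), sqrt_mul (sq_nonneg _),
    sqrt_sq (rpow_nonneg hq0.le _)]

lemma bP_zero_zero (hq0 : 0 < q) (hq1 : q < 1) (n i j : ℝ) :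
    bP q n i j 0 0 = q ^ (n + j + 1/2) * √(1 - q ^ (2*n + 2*i + 2)) *
      √(1 - q ^ (2*n - 2*j + 3)) / (1 - q ^ (4*n + 4)) := by
  have hc : 0 < 1 - q ^ 2 := by nlinarith
  have hpow : q ^ ((i + j - 1/2) / 2) * q ^ ((1 - (n + i + 1)) / 2) *
      q ^ ((1 - (n - j + 3/2)) / 2) / q ^ (1 - (2 * n + 2)) = q ^ (n + j + 1/2) := by
    rw [← rpow_add hq0, ← rpow_add hq0, ← rpow_sub hq0]; ring_nf
  simp only [bP, Matrix.smul_apply, Matrix.of_apply, Matrix.cons_val', Matrix.cons_val_zero,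
    Matrix.empty_val', Matrix.cons_val_fin_one, smul_eq_mul]
  rw [sqrt_qnum hq0 hq1, sqrt_qnum hq0 hq1, qnum_eq hq0 hq1, ← hpow,
    show 2 * (2 * n + 2) = 4 * n + 4 by ring]
  generalize 1 - q ^ (4 * n + 4) = Q
  generalize 1 - q ^ 2 = c at hc
  field_simp
  rw [sq_sqrt hc.le]
  ring

lemma bP_one_zero (hq0 : 0 < q) (hq1 : q < 1) (n i j : ℝ) :
    bP q n i j 1 0 = -(q ^ (2 * n) * (1 - q ^ 2) * √(1 - q ^ (2*n + 2*i + 2)) *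
      √(1 - q ^ (2*n + 2*j + 1)) / ((1 - q ^ (4*n + 2)) * (1 - q ^ (4*n + 4)))) := by
  have hc : 0 < 1 - q ^ 2 := by nlinarith
  have hpow : q ^ ((i + j - 1/2) / 2) * q ^ ((1 - (n + i + 1)) / 2) * q ^ (-n - 1) *
      q ^ ((1 - (n + j + 1/2)) / 2) / (q ^ (1 - (2 * n + 1)) * q ^ (1 - (2 * n + 2))) =
        q ^ (2 * n) := by
    rw [← rpow_add hq0, ← rpow_add hq0, ← rpow_add hq0, ← rpow_add hq0, ← rpow_sub hq0]
    ring_nf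
  simp only [bP, Matrix.smul_apply, Matrix.of_apply, Matrix.cons_val', Matrix.cons_val_zero,
    Matrix.cons_val_one, Matrix.empty_val', Matrix.cons_val_fin_one, smul_eq_mul]
  rw [sqrt_qnum hq0 hq1, sqrt_qnum hq0 hq1, qnum_eq hq0 hq1, qnum_eq hq0 hq1, ← hpow,
    show 2 * (2 * n + 2) = 4 * n + 4 by ring, show 2 * (2 * n + 1) = 4 * n + 2 by ring]
  generalize 1 - q ^ (4 * n + 4) = Q
  generalize 1 - q ^ (4 * n + 2) = Q'
  generalize 1 - q ^ 2 = c at hc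
  field_simp
  rw [sq_sqrt hc.le]
  ring

lemma bP_one_one (hq0 : 0 < q) (hq1 : q < 1) (n i j : ℝ) :
    bP q n i j 1 1 = q ^ (n + j - 1/2) * √(1 - q ^ (2*n + 2*i + 2)) *
      √(1 - q ^ (2*n - 2*j + 1)) / (1 - q ^ (4*n + 2)) := by
  have hc : 0 < 1 - q ^ 2 := by nlinarith
  have hpow : q ^ ((i + j - 1/2) / 2) * q ^ ((1 - (n + i + 1)) / 2) * q ^ (-1 / 2 : ℝ) *
      q ^ ((1 - (n - j + 1/2)) / 2) / q ^ (1 - (2 * n + 1)) = q ^ (n + j - 1/2) := by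
    rw [← rpow_add hq0, ← rpow_add hq0, ← rpow_add hq0, ← rpow_sub hq0]; ring_nf
  simp only [bP, Matrix.smul_apply, Matrix.of_apply, Matrix.cons_val', Matrix.cons_val_one,
    Matrix.empty_val', Matrix.cons_val_fin_one, smul_eq_mul]
  rw [sqrt_qnum hq0 hq1, sqrt_qnum hq0 hq1, qnum_eq hq0 hq1, ← hpow,
    show 2 * (2 * n + 1) = 4 * n + 2 by ring]
  generalize 1 - q ^ (4 * n + 2) = Q
  generalize 1 - q ^ 2 = c at hc
  field_simp
  rw [sq_sqrt hc.le]
  ring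

lemma bP_zero_one (n i j : ℝ) : bP q n i j 0 1 = 0 := by
  simp [bP]

lemma abs_bP_zero_zero_sub_le (hq0 : 0 < q) (hq1 : q < 1) {n j : ℝ} (i : ℝ) (hn : 0 ≤ n)
    (hj : 0 ≤ n + j + 1/2) :
    |bP q n i j 0 0 - q ^ (n + j - 1/2) * √(1 - q ^ (2*n + 2*i + 2)) *
        (q * √(1 - q ^ (2*n - 2*j + 3)))| ≤ (1 - q ^ 2)⁻¹ * q ^ (2 * n) := by
  have hx : q ^ (n + j - 1/2) * √(1 - q ^ (2*n + 2*i + 2)) * (q * √(1 - q ^ (2*n - 2*j + 3))) =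
      q ^ (n + j + 1/2) * √(1 - q ^ (2*n + 2*i + 2)) * √(1 - q ^ (2*n - 2*j + 3)) := by
    rw [show n + j + 1/2 = (n + j - 1/2) + 1 by ring, rpow_add_one hq0.ne']; ring
  have hx1 : q ^ (n + j + 1/2) * √(1 - q ^ (2*n + 2*i + 2)) * √(1 - q ^ (2*n - 2*j + 3)) ≤ 1 :=
    mul_le_one₀ (mul_le_one₀ (rpow_le_one hq0.le hq1.le hj) (sqrt_nonneg _)
      (sqrt_one_sub_rpow_le_one hq0.le _)) (sqrt_nonneg _) (sqrt_one_sub_rpow_le_one hq0.le _)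
  rw [bP_zero_zero hq0 hq1, hx]
  exact abs_div_one_sub_sub_self_le (by positivity) hx1 (by positivity)
    (rpow_le_rpow_of_exponent_ge hq0 hq1.le (by linarith)) (by nlinarith)
    (one_sub_sq_le_one_sub_rpow hq0 hq1 (by linarith))

lemma abs_bP_one_one_sub_le (hq0 : 0 < q) (hq1 : q < 1) {n j : ℝ} (i : ℝ) (hn : 0 ≤ n)
    (hj : 0 ≤ n + j - 1/2) :
    |bP q n i j 1 1 - q ^ (n + j - 1/2) * √(1 - q ^ (2*n + 2*i + 2)) *
        √(1 - q ^ (2*n - 2*j + 1))| ≤ (1 - q ^ 2)⁻¹ * q ^ (2 * n) := by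
  have hx1 : q ^ (n + j - 1/2) * √(1 - q ^ (2*n + 2*i + 2)) * √(1 - q ^ (2*n - 2*j + 1)) ≤ 1 :=
    mul_le_one₀ (mul_le_one₀ (rpow_le_one hq0.le hq1.le hj) (sqrt_nonneg _)
      (sqrt_one_sub_rpow_le_one hq0.le _)) (sqrt_nonneg _) (sqrt_one_sub_rpow_le_one hq0.le _)
  rw [bP_one_one hq0 hq1]
  exact abs_div_one_sub_sub_self_le (by positivity) hx1 (by positivity)
    (rpow_le_rpow_of_exponent_ge hq0 hq1.le (by linarith)) (by nlinarith)
    (one_sub_sq_le_one_sub_rpow hq0 hq1 (by linarith))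

lemma abs_bP_one_zero_le (hq0 : 0 < q) (hq1 : q < 1) {n : ℝ} (i j : ℝ) (hn : 0 ≤ n) :
    |bP q n i j 1 0| ≤ (1 - q ^ 2)⁻¹ * q ^ (2 * n) := by
  have hc : 0 < 1 - q ^ 2 := by nlinarith
  have hQ := one_sub_sq_le_one_sub_rpow hq0 hq1 (x := 4 * n + 2) (by linarith)
  have hQ' := one_sub_sq_le_one_sub_rpow hq0 hq1 (x := 4 * n + 4) (by linarith)
  rw [bP_one_zero hq0 hq1, abs_neg, abs_of_nonneg (div_nonneg (by positivity)
    (mul_pos (hc.trans_le hQ) (hc.trans_le hQ')).le)]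
  calc _ ≤ q ^ (2 * n) * (1 - q ^ 2) * 1 * 1 / ((1 - q ^ 2) * (1 - q ^ 2)) := by
        gcongr
        · exact sqrt_one_sub_rpow_le_one hq0.le _
        · exact sqrt_one_sub_rpow_le_one hq0.le _
        · linarith
    _ = (1 - q ^ 2)⁻¹ * q ^ (2 * n) := by field_simp

end QNumber

/-- There is `C > 0` depending only on `q` such that for all `n ∈ ½ℤ₊` with
`n ≥ 1/2`, `i ∈ {-n,…,n}`, `j ∈ {-n+1/2,…,n-1/2}`, every entry of
`b⁺_{nij} - q^(n+j-1/2) (1-q^(2n+2i+2))^(1/2) diag(q(1-q^(2n-2j+3))^(1/2), (1-q^(2n-2j+1))^(1/2))`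
has absolute value at most `C·q^(2n)`. -/
theorem bPlus_asymptotics (q : ℝ) (hq0 : 0 < q) (hq1 : q < 1) :
    ∃ C : ℝ, 0 < C ∧ ∀ n i j : ℝ, HalfNat n → 1/2 ≤ n → IdxRange n i → JRangeIn n j →
      ∀ r s : Fin 2,
        |(bP q n i j - (q ^ (n + j - 1/2) * Real.sqrt (1 - q ^ (2*n + 2*i + 2))) •
            !![q * Real.sqrt (1 - q ^ (2*n - 2*j + 3)), 0;
               0, Real.sqrt (1 - q ^ (2*n - 2*j + 1))]) r s|
          ≤ C * q ^ (2 * n) := by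
  have hC : 0 < (1 - q ^ 2)⁻¹ := inv_pos.2 (by nlinarith)
  refine ⟨(1 - q ^ 2)⁻¹, hC, ?_⟩
  rintro n i j - hn - ⟨⟨k, hk⟩, -⟩ r s
  have hn0 : 0 ≤ n := by linarith
  have hj : 0 ≤ n + j - 1/2 := by linarith [k.cast_nonneg (α := ℝ)]
  fin_cases r <;> fin_cases s <;>
    simp only [Matrix.sub_apply, Matrix.smul_apply, Matrix.of_apply, Matrix.cons_val',
      Matrix.cons_val_zero, Matrix.cons_val_one, Matrix.empty_val', Matrix.cons_val_fin_one,
      smul_eq_mul, mul_zero, sub_zero, Fin.zero_eta, Fin.mk_one, Fin.isValue]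
  · exact abs_bP_zero_zero_sub_le hq0 hq1 i hn0 (by linarith)
  · rw [bP_zero_one, abs_zero]; exact mul_nonneg hC.le (rpow_nonneg hq0.le _)
  · exact abs_bP_one_zero_le hq0 hq1 i j hn0
  · exact abs_bP_one_one_sub_le hq0 hq1 i hn0 hj
end
end

section
/- There exists a constant C > 0, depending only on q, such that for all n ∈ ½ℤ₊ with n ≥ 1/2 and all half-integers i ∈ {−n, …, n} and j with −n−1/2 ≤ j ≤ n+1/2, one has 0 ≤ q^{(i+j−1/2)/2}[n−i]^{1/2} · q^{1/2}[n+j+1/2]^{1/2}/([2n][2n+1]) ≤ C·q^{2n}. -/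
noncomputable section

open Real

/-!
For `0 < q < 1` one has `[m] = q^(1-m) (1 - q^(2m)) / (1 - q²)`, so `q^(1-m) ≤ [m]` once `m ≥ 1`
and `[m] ≤ q^(1-m) / (1 - q²)` for every `m`. Bounding both square roots from above and
`[2n][2n+1]` from below by `q^(1-4n)`, the entry is at most `q^(3n+i) / (1 - q²)`, and
`q^(3n+i) ≤ q^(2n)` because `i ≥ -n`.
-/

lemma qnum_eq_rpow_mul {q : ℝ} (hq0 : 0 < q) (hq1 : q ≠ 1) (m : ℝ) :
    qnum q m = q ^ (1 - m) * (1 - q ^ (2 * m)) / (1 - q ^ 2) := by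
  have hq2 : 1 - q ^ 2 ≠ 0 :=
    sub_ne_zero.2 fun h ↦ hq1 ((pow_eq_one_iff_of_nonneg hq0.le two_ne_zero).1 h.symm)
  have hneg : q ^ (-m) = q ^ (1 - m) / q := by
    rw [← rpow_sub_one hq0.ne']; ring_nf
  have hpos : q ^ m = q ^ (1 - m) * q ^ (2 * m) / q := by
    rw [← rpow_add hq0, ← rpow_sub_one hq0.ne']; ring_nf
  have hden : q - q⁻¹ = -(1 - q ^ 2) / q := by field_simp; ring
  rw [qnum, hneg, hpos, hden]
  field_simp
  ring

lemma rpow_one_sub_le_qnum {q : ℝ} (hq0 : 0 < q) (hq1 : q < 1) {m : ℝ} (hm : 1 ≤ m) :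
    q ^ (1 - m) ≤ qnum q m := by
  have hq2 : 0 < 1 - q ^ 2 := by nlinarith
  rw [qnum_eq_rpow_mul hq0 hq1.ne, le_div_iff₀ hq2]
  gcongr
  have : q ^ (2 * m) ≤ q ^ (2 : ℝ) := rpow_le_rpow_of_exponent_ge hq0 hq1.le (by linarith)
  rwa [rpow_two] at this

lemma qnum_le_rpow_one_sub_div {q : ℝ} (hq0 : 0 < q) (hq1 : q < 1) (m : ℝ) :
    qnum q m ≤ q ^ (1 - m) / (1 - q ^ 2) := by
  have hq2 : 0 < 1 - q ^ 2 := by nlinarith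
  rw [qnum_eq_rpow_mul hq0 hq1.ne]
  gcongr
  exact mul_le_of_le_one_right (by positivity) (by linarith [rpow_pos_of_pos hq0 (2 * m)])

lemma sqrt_qnum_le {q : ℝ} (hq0 : 0 < q) (hq1 : q < 1) (m : ℝ) :
    √(qnum q m) ≤ q ^ ((1 - m) / 2) / √(1 - q ^ 2) := by
  calc √(qnum q m) ≤ √(q ^ (1 - m) / (1 - q ^ 2)) :=
        Real.sqrt_le_sqrt (qnum_le_rpow_one_sub_div hq0 hq1 m)
    _ = q ^ ((1 - m) / 2) / √(1 - q ^ 2) := by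
        rw [Real.sqrt_div' _ (by nlinarith), Real.sqrt_eq_rpow, ← rpow_mul hq0.le]
        ring_nf

lemma rpow_one_sub_four_mul_le_qnum_mul_qnum {q : ℝ} (hq0 : 0 < q) (hq1 : q < 1) {n : ℝ}
    (hn : 1 / 2 ≤ n) : q ^ (1 - 4 * n) ≤ qnum q (2 * n) * qnum q (2 * n + 1) := by
  calc q ^ (1 - 4 * n) = q ^ (1 - 2 * n) * q ^ (1 - (2 * n + 1)) := by
        rw [← rpow_add hq0]; ring_nf
    _ ≤ qnum q (2 * n) * qnum q (2 * n + 1) :=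
        mul_le_mul (rpow_one_sub_le_qnum hq0 hq1 (by linarith))
          (rpow_one_sub_le_qnum hq0 hq1 (by linarith)) (by positivity)
          ((rpow_pos_of_pos hq0 _).le.trans (rpow_one_sub_le_qnum hq0 hq1 (by linarith)))

/-- There is `C > 0` depending only on `q` such that for all `n ∈ ½ℤ₊` with
`n ≥ 1/2`, `i ∈ {-n,…,n}`, `j ∈ {-n-1/2,…,n+1/2}`, minus the (1,2) entry of `a⁻_{nij}` satisfies
`0 ≤ q^((i+j-1/2)/2) [n-i]^(1/2) · q^(1/2) [n+j+1/2]^(1/2)/([2n][2n+1]) ≤ C·q^(2n)`. -/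
theorem aMinus_offdiagonal_estimate (q : ℝ) (hq0 : 0 < q) (hq1 : q < 1) :
    ∃ C : ℝ, 0 < C ∧ ∀ n i j : ℝ, HalfNat n → 1/2 ≤ n → IdxRange n i → JRangeOut n j →
      0 ≤ q ^ ((i + j - 1/2) / 2) * Real.sqrt (qnum q (n - i)) *
            (q ^ ((1:ℝ)/2) * Real.sqrt (qnum q (n + j + 1/2))
              / (qnum q (2*n) * qnum q (2*n + 1))) ∧
        q ^ ((i + j - 1/2) / 2) * Real.sqrt (qnum q (n - i)) *
            (q ^ ((1:ℝ)/2) * Real.sqrt (qnum q (n + j + 1/2))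
              / (qnum q (2*n) * qnum q (2*n + 1)))
          ≤ C * q ^ (2 * n) := by
  have hq2 : 0 < 1 - q ^ 2 := by nlinarith
  refine ⟨(1 - q ^ 2)⁻¹, inv_pos.2 hq2, fun n i j _ hn ⟨⟨k, hk⟩, _⟩ _ => ?_⟩
  have hden := rpow_one_sub_four_mul_le_qnum_mul_qnum hq0 hq1 hn
  have hden_pos := (rpow_pos_of_pos hq0 _).trans_le hden
  have hi : -n ≤ i := by linarith [k.cast_nonneg (α := ℝ)]
  refine ⟨mul_nonneg (by positivity) (div_nonneg (by positivity) hden_pos.le), ?_⟩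
  calc _ ≤ q ^ ((i + j - 1/2) / 2) * (q ^ ((1 - (n - i)) / 2) / √(1 - q ^ 2)) *
          (q ^ ((1:ℝ)/2) * (q ^ ((1 - (n + j + 1/2)) / 2) / √(1 - q ^ 2)) / q ^ (1 - 4 * n)) := by
        gcongr <;> exact sqrt_qnum_le hq0 hq1 _
    _ = q ^ (3 * n + i) / (1 - q ^ 2) := by
        rw [show 3 * n + i = (i + j - 1/2) / 2 + (1 - (n - i)) / 2 + 1/2
          + (1 - (n + j + 1/2)) / 2 - (1 - 4 * n) by ring]
        simp only [rpow_add hq0, rpow_sub hq0]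
        field_simp
        rw [sq_sqrt hq2.le]
    _ ≤ q ^ (2 * n) / (1 - q ^ 2) :=
        div_le_div_of_nonneg_right (rpow_le_rpow_of_exponent_ge hq0 hq1.le (by linarith)) hq2.le
    _ = (1 - q ^ 2)⁻¹ * q ^ (2 * n) := by ring
end
end
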